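/- Let v ≥ 1 and let T be a v²×4 array with T(2,3,4) a VOA(U_{2,3}, v). Suppose the uniform distribution (X1,X2,X3,X4) on the rows of T has entropy function a·r1 + b·r2, where r1 is the rank function of Û^1_{2,5} and r2 that of U^{234}_{2,3}. Let A_i (resp. B_i) be the set of values of column 2 (resp. column 3) co-occurring with value i of column 1. Then for every i: |A_i| = |B_i|, the subarray of T(2,3,4) induced by A_i and B_i is a VOA(U_{2,3}, |A_i|), the sets A_i × B_i partition the square of the alphabet, and a = (1/2)·H(|A_i|²/v² : i). -/

import Mathlib

open Finset
open scoped BigOperators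
noncomputable section

/-- Probability, under the pmf `p` on the rows, that the columns indexed by `A` of the
array `T` agree with their values on row `r`. -/
def colProb {R : Type*} [Fintype R] (p : R → ℝ) (T : R → Fin 4 → ℕ)
    (A : Finset (Fin 4)) (r : R) : ℝ :=
  ∑ s, if ∀ i ∈ A, T s i = T r i then p s else 0

/-- The Shannon entropy `H(X_A)` of the columns of `T` indexed by `A`, where the rows
carry the pmf `p`. -/
def colEntropy {R : Type*} [Fintype R] (p : R → ℝ) (T : R → Fin 4 → ℕ)
    (A : Finset (Fin 4)) : ℝ :=
  -∑ r, p r * Real.log (colProb p T A r)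

/-- `T` is a `VOA(U_{2,3}, v)`: a `v² × 3` array over an alphabet of size `v` in which
every ordered pair of symbols occurs exactly once in each pair of distinct columns
(a Latin square of order `v` in orthogonal-array form). -/
def IsVOA23 (v : ℕ) (T : Fin (v ^ 2) → Fin 3 → Fin v) : Prop :=
  ∀ j k : Fin 3, j ≠ k → ∀ a b : Fin v,
    (Finset.univ.filter (fun r => T r j = a ∧ T r k = b)).card = 1

/-- Combine a first column `c1` (alphabet `Fin t`) with a `v²×3` array `c` into a
`v²×4` array of naturals (column `0` is `c1`, columns `1,2,3` are those of `c`). -/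
def mkT {v t : ℕ} (c1 : Fin (v ^ 2) → Fin t) (c : Fin (v ^ 2) → Fin 3 → Fin v) :
    Fin (v ^ 2) → Fin 4 → ℕ := fun r i =>
  if i = 0 then (c1 r : ℕ)
  else (c r ⟨(i : ℕ) - 1, by have h := i.isLt; omega⟩ : ℕ)

/-- Rank function of `Û^1_{2,5}` (element `1` is index `0`). -/
def rU25hat1 (A : Finset (Fin 4)) : ℝ :=
  if A = {0} then 2 else min 2 (A.card : ℝ)

/-- Rank function of the wheel matroid `W^{12}_2`: elements `1,2` (indices `0,1`)
are parallel, and each of them forms a `U_{2,3}` with elements `3,4`. -/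
def rW12 (A : Finset (Fin 4)) : ℝ :=
  if A = ∅ then 0 else if A ⊆ ({0, 1} : Finset (Fin 4)) then 1 else min 2 (A.card : ℝ)

/-- Rank function of the wheel matroid `W^{13}_2`: elements `1,3` (indices `0,2`)
are parallel. -/
def rW13 (A : Finset (Fin 4)) : ℝ :=
  if A = ∅ then 0 else if A ⊆ ({0, 2} : Finset (Fin 4)) then 1 else min 2 (A.card : ℝ)

/-- Rank function of `U^{234}_{2,3}`: a `U_{2,3}` on `{2,3,4}` (indices `1,2,3`) with
element `1` (index `0`) a loop. -/
def rU23_234 (A : Finset (Fin 4)) : ℝ :=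
  min 2 ((A ∩ ({1, 2, 3} : Finset (Fin 4))).card : ℝ)

/-- The set of values of column `j` of the `VOA` part co-occurring with value `i`
in column `1`. -/
def valSet {v t : ℕ} (c1 : Fin (v ^ 2) → Fin t) (c : Fin (v ^ 2) → Fin 3 → Fin v)
    (j : Fin 3) (i : Fin t) : Finset (Fin v) :=
  (Finset.univ.filter (fun r => c1 r = i)).image (fun r => c r j)


/-!
Any two of the columns `2,3,4` of a `VOA` determine the row. For `j ≠ k` in `{2,3,4}` both rank
functions satisfy `r{1,j} + r{1,k} = r{1} + r{1,j,k}`, so the entropy hypothesis gives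
`I(X_j ; X_k | X_1) = 0`. For the uniform distribution on rows, equality in Gibbs' inequality
then forces every fibre `G_i` of column `1` to be a combinatorial rectangle in any two of these
columns, so `|G_i| = |A_i| |B_i| = |A_i| |C_i| = |B_i| |C_i|` (`C_i` the values of column `4`).
Hence `|A_i| = |B_i|`, `G_i` is exactly the set of rows with values in `A_i × B_i`, on which the
array is again a `VOA`, and `2a = H(X_1)` is the entropy of the fibre sizes `|A_i|² / v²`.
-/

open Real Function

section CardFilter

variable {R α β : Type*} [DecidableEq α] [DecidableEq β]
  (G : Finset R) (u : R → α) (w : R → β)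

lemma sum_card_filter_mul_card_filter_eq (hinj : Set.InjOn (fun r => (u r, w r)) G) :
    ∑ r ∈ G, #{s ∈ G | u s = u r} * #{s ∈ G | w s = w r} =
      #{p ∈ G ×ˢ G | ∃ r ∈ G, u r = u p.1 ∧ w r = w p.2} := by
  simp_rw [← card_product, ← card_sigma]
  refine card_nbij (·.2) (fun x hx => ?_) (fun x hx y hy hxy => ?_) (fun p hp => ?_)
  · simp only [coe_sigma, Set.mem_sigma_iff, mem_coe, mem_product, mem_filter] at hx ⊢
    exact ⟨⟨hx.2.1.1, hx.2.2.1⟩, x.1, hx.1, hx.2.1.2.symm, hx.2.2.2.symm⟩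
  · simp only [coe_sigma, Set.mem_sigma_iff, mem_coe, mem_product, mem_filter] at hx hy
    obtain ⟨r, s, s'⟩ := x
    obtain ⟨q, t, t'⟩ := y
    obtain ⟨rfl, rfl⟩ := Prod.ext_iff.1 hxy
    obtain rfl : r = q := hinj hx.1 hy.1
      (Prod.ext (hx.2.1.2.symm.trans hy.2.1.2) (hx.2.2.2.symm.trans hy.2.2.2))
    rfl
  · simp only [coe_filter, mem_product, Set.mem_ofPred_eq] at hp
    obtain ⟨⟨hs, hs'⟩, r, hr, hu, hw⟩ := hp
    exact ⟨⟨r, p⟩, by simp [hs, hs', hr, hu, hw], rfl⟩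

lemma card_sub_sum_div_card_le_sum_log :
    (#G : ℝ) - (∑ r ∈ G, #{s ∈ G | u s = u r} * #{s ∈ G | w s = w r} : ℕ) / #G ≤
      ∑ r ∈ G, (log #G - log #{s ∈ G | u s = u r} - log #{s ∈ G | w s = w r}) := by
  calc (#G : ℝ) - (∑ r ∈ G, #{s ∈ G | u s = u r} * #{s ∈ G | w s = w r} : ℕ) / #G
      = ∑ r ∈ G, (1 - (#{s ∈ G | u s = u r} * #{s ∈ G | w s = w r} : ℝ) / #G) := by
        push_cast
        rw [sum_sub_distrib, sum_div]
        simp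
    _ ≤ _ := sum_le_sum fun r hr => by
        have hG : (0 : ℝ) < #G := Nat.cast_pos.2 (card_pos.2 ⟨r, hr⟩)
        have hu : (0 : ℝ) < #{s ∈ G | u s = u r} :=
          Nat.cast_pos.2 (card_pos.2 ⟨r, mem_filter.2 ⟨hr, rfl⟩⟩)
        have hw : (0 : ℝ) < #{s ∈ G | w s = w r} :=
          Nat.cast_pos.2 (card_pos.2 ⟨r, mem_filter.2 ⟨hr, rfl⟩⟩)
        have := log_le_sub_one_of_pos (div_pos (mul_pos hu hw) hG)
        rw [log_div (mul_pos hu hw).ne' hG.ne', log_mul hu.ne' hw.ne'] at this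
        linarith

variable {G u w}

lemma sum_log_card_filter_nonneg (hinj : Set.InjOn (fun r => (u r, w r)) G) :
    0 ≤ ∑ r ∈ G, (log #G - log #{s ∈ G | u s = u r} - log #{s ∈ G | w s = w r}) := by
  refine le_trans ?_ (card_sub_sum_div_card_le_sum_log G u w)
  have hle := (sum_card_filter_mul_card_filter_eq G u w hinj).trans_le (card_filter_le _ _)
  rw [card_product] at hle
  rw [sub_nonneg]
  exact div_le_of_le_mul₀ (Nat.cast_nonneg _) (Nat.cast_nonneg _) (by exact_mod_cast hle)

lemma exists_mem_of_sum_log_card_filter_nonpos (hinj : Set.InjOn (fun r => (u r, w r)) G)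
    (hsum : ∑ r ∈ G, (log #G - log #{s ∈ G | u s = u r} - log #{s ∈ G | w s = w r}) ≤ 0)
    {s s' : R} (hs : s ∈ G) (hs' : s' ∈ G) : ∃ r ∈ G, u r = u s ∧ w r = w s' := by
  have hG : (0 : ℝ) < #G := Nat.cast_pos.2 (card_pos.2 ⟨s, hs⟩)
  have hge : #G * #G ≤ ∑ r ∈ G, #{s ∈ G | u s = u r} * #{s ∈ G | w s = w r} := by
    have := (card_sub_sum_div_card_le_sum_log G u w).trans hsum
    rw [sub_nonpos, le_div_iff₀ hG] at this
    exact_mod_cast this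
  rw [sum_card_filter_mul_card_filter_eq G u w hinj, ← card_product] at hge
  exact (filter_card_eq ((card_filter_le _ _).antisymm hge) (s, s') (mem_product.2 ⟨hs, hs'⟩))

end CardFilter

section Fibers

variable {R ι α β : Type*} [Fintype R]

def fiberCard [DecidableEq β] (f : R → β) (r : R) : ℕ := #{s | f s = f r}

def uniformEntropy [DecidableEq β] (f : R → β) : ℝ :=
  -∑ r, (Fintype.card R : ℝ)⁻¹ * log (fiberCard f r / Fintype.card R)

def FiberRectangular (z : R → ι) (u : R → α) (w : R → β) : Prop :=
  ∀ r s, z r = z s → ∃ q, z q = z r ∧ u q = u r ∧ w q = w s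

variable [DecidableEq ι] [DecidableEq α] [DecidableEq β]

lemma fiberCard_prodMk (z : R → ι) (u : R → α) (r : R) :
    fiberCard (fun s => (z s, u s)) r = #{s ∈ {s | z s = z r} | u s = u r} := by
  simp only [fiberCard, Prod.mk.injEq, filter_filter]

lemma FiberRectangular.of_sum_log_fiberCard_eq_zero {z : R → ι} {u : R → α} {w : R → β}
    (hinj : Injective fun r => (u r, w r))
    (hsum : ∑ r, (log (fiberCard z r) - log (fiberCard (fun s => (z s, u s)) r)
      - log (fiberCard (fun s => (z s, w s)) r)) = 0) :
    FiberRectangular z u w := by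
  set F : ι → ℝ := fun i => ∑ r ∈ {r | z r = i}, (log #{s | z s = i}
    - log #{s ∈ {s | z s = i} | u s = u r} - log #{s ∈ {s | z s = i} | w s = w r})
  have hF : ∀ i ∈ univ.image z, 0 ≤ F i := fun i _ => sum_log_card_filter_nonneg hinj.injOn
  have hF0 : ∑ i ∈ univ.image z, F i = 0 := by
    rw [← hsum, ← sum_fiberwise_of_maps_to fun r _ => mem_image_of_mem z (mem_univ r)]
    refine sum_congr rfl fun i _ => sum_congr rfl fun r hr => ?_
    rw [fiberCard_prodMk, fiberCard_prodMk, fiberCard, (mem_filter.1 hr).2]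
  intro r s hrs
  have hFr := (sum_eq_zero_iff_of_nonneg hF).1 hF0 (z r) (mem_image_of_mem z (mem_univ r))
  obtain ⟨q, hq, hu, hw⟩ := exists_mem_of_sum_log_card_filter_nonpos hinj.injOn hFr.le
    (s := r) (s' := s) (by simp) (by simp [hrs])
  exact ⟨q, (mem_filter.1 hq).2, hu, hw⟩

end Fibers

section UniformEntropy

variable {R ι α β : Type*} [Fintype R] [DecidableEq ι] [DecidableEq α] [DecidableEq β]

lemma fiberCard_eq_one {f : R → β} (hf : Injective f) (r : R) : fiberCard f r = 1 :=
  card_eq_one.2 ⟨r, by ext s; simp [hf.eq_iff]⟩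

lemma uniformEntropy_eq_log_sub_sum (f : R → β) :
    uniformEntropy f =
      log (Fintype.card R) - (Fintype.card R : ℝ)⁻¹ * ∑ r, log (fiberCard f r) := by
  rcases isEmpty_or_nonempty R with hR | hR
  · simp [uniformEntropy]
  have hN : (0 : ℝ) < Fintype.card R := Nat.cast_pos.2 Fintype.card_pos
  have hlog (r : R) : log (fiberCard f r / Fintype.card R) =
      log (fiberCard f r) - log (Fintype.card R) :=
    log_div (Nat.cast_pos.2 (card_pos.2 ⟨r, by simp⟩)).ne' hN.ne'
  simp only [uniformEntropy, hlog, ← mul_sum, sum_sub_distrib, sum_const, card_univ,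
    nsmul_eq_mul]
  field_simp
  ring

lemma uniformEntropy_eq_sum_fiber [Fintype ι] {N : ℕ} (hN : Fintype.card R = N) (z : R → ι) :
    uniformEntropy z = -∑ i, (#{r | z r = i} / N : ℝ) * log (#{r | z r = i} / N) := by
  subst hN
  rw [uniformEntropy, ← sum_fiberwise univ z]
  congr 1
  refine sum_congr rfl fun i _ => ?_
  rw [sum_congr rfl fun r hr => by rw [fiberCard, (mem_filter.1 hr).2], sum_const, nsmul_eq_mul]
  ring

lemma colEntropy_eq_uniformEntropy {N : ℕ} (hN : Fintype.card R = N) (T : R → Fin 4 → ℕ)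
    (A : Finset (Fin 4)) (f : R → β) (hf : ∀ r s, (∀ i ∈ A, T s i = T r i) ↔ f s = f r) :
    colEntropy (fun _ => (N : ℝ)⁻¹) T A = uniformEntropy f := by
  subst hN
  have hprob (r : R) : colProb (fun _ => (Fintype.card R : ℝ)⁻¹) T A r =
      fiberCard f r / Fintype.card R := by
    simp only [colProb, ← sum_filter, sum_const, nsmul_eq_mul, fiberCard, hf, div_eq_mul_inv]
  simp only [colEntropy, uniformEntropy, hprob]

lemma FiberRectangular.of_condMutualInfo_eq_zero {z : R → ι} {u : R → α} {w : R → β}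
    (hinj : Injective fun r => (u r, w r))
    (h : uniformEntropy (fun r => (z r, u r)) + uniformEntropy (fun r => (z r, w r))
      - uniformEntropy z - uniformEntropy (fun r => (z r, u r, w r)) = 0) :
    FiberRectangular z u w := by
  rcases isEmpty_or_nonempty R with hR | hR
  · exact fun r => isEmptyElim r
  have hone := fiberCard_eq_one (f := fun r => (z r, u r, w r))
    fun r s hrs => hinj (Prod.ext (congrArg (·.2.1) hrs) (congrArg (·.2.2) hrs))
  simp only [uniformEntropy_eq_log_sub_sum, hone, Nat.cast_one, log_one, sum_const_zero,
    mul_zero] at h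
  refine FiberRectangular.of_sum_log_fiberCard_eq_zero hinj ?_
  have hN : (Fintype.card R : ℝ)⁻¹ ≠ 0 := inv_ne_zero (Nat.cast_pos.2 Fintype.card_pos).ne'
  rw [sum_sub_distrib, sum_sub_distrib]
  exact (mul_eq_zero.1 (by linear_combination h)).resolve_left hN

end UniformEntropy

namespace FiberRectangular

variable {R ι α β : Type*} [Fintype R] [DecidableEq ι] [DecidableEq α] [DecidableEq β]
  {z : R → ι} {u : R → α} {w : R → β}

lemma exists_of_mem_image (hrect : FiberRectangular z u w) {i : ι} {x : α} {y : β}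
    (hx : x ∈ ({r | z r = i} : Finset R).image u)
    (hy : y ∈ ({r | z r = i} : Finset R).image w) :
    ∃ q, z q = i ∧ u q = x ∧ w q = y := by
  simp only [mem_image, mem_filter, mem_univ, true_and] at hx hy
  obtain ⟨r, rfl, rfl⟩ := hx
  obtain ⟨s, hs, rfl⟩ := hy
  exact hrect r s hs.symm

lemma card_image_mul_card_image (hinj : Injective fun r => (u r, w r))
    (hrect : FiberRectangular z u w) (i : ι) :
    #(({r | z r = i} : Finset R).image u) * #(({r | z r = i} : Finset R).image w) =
      #({r | z r = i} : Finset R) := by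
  rw [← card_product, ← card_image_of_injective _ hinj]
  congr 1
  ext ⟨x, y⟩
  constructor
  · intro hxy
    obtain ⟨hx, hy⟩ := mem_product.1 hxy
    obtain ⟨q, hq, rfl, rfl⟩ := hrect.exists_of_mem_image hx hy
    exact mem_image_of_mem _ (by simpa using hq)
  · simp only [mem_image, mem_product, Prod.mk.injEq]
    rintro ⟨r, hr, rfl, rfl⟩
    exact ⟨⟨r, hr, rfl⟩, r, hr, rfl⟩

lemma filter_mem_image_eq (hinj : Injective fun r => (u r, w r))
    (hrect : FiberRectangular z u w) (i : ι) :
    ({r | u r ∈ ({r | z r = i} : Finset R).image u ∧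
        w r ∈ ({r | z r = i} : Finset R).image w} : Finset R) =
      ({r | z r = i} : Finset R) := by
  ext r
  simp only [mem_filter, mem_univ, true_and]
  constructor
  · rintro ⟨hx, hy⟩
    obtain ⟨q, hq, hu, hw⟩ := hrect.exists_of_mem_image hx hy
    rwa [← hinj (Prod.ext hu hw)]
  · rintro rfl
    exact ⟨mem_image_of_mem u (by simp), mem_image_of_mem w (by simp)⟩

lemma card_filter_eq_one (hinj : Injective fun r => (u r, w r))
    (hrect : FiberRectangular z u w) {i : ι} {x : α} {y : β}
    (hx : x ∈ ({r | z r = i} : Finset R).image u)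
    (hy : y ∈ ({r | z r = i} : Finset R).image w) :
    #{r ∈ ({r | z r = i} : Finset R) | u r = x ∧ w r = y} = 1 := by
  obtain ⟨q, hq, rfl, rfl⟩ := hrect.exists_of_mem_image hx hy
  refine card_eq_one.2 ⟨q, ?_⟩
  ext r
  simp only [mem_filter, mem_univ, true_and, mem_singleton]
  exact ⟨fun h => hinj (Prod.ext h.2.1 h.2.2), by rintro rfl; exact ⟨hq, rfl, rfl⟩⟩

lemma existsUnique_mem_image (hbij : Bijective fun r => (u r, w r))
    (hrect : FiberRectangular z u w) (x : α) (y : β) :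
    ∃! i, x ∈ ({r | z r = i} : Finset R).image u ∧
      y ∈ ({r | z r = i} : Finset R).image w := by
  obtain ⟨r, hr⟩ := hbij.2 (x, y)
  obtain ⟨rfl, rfl⟩ := Prod.ext_iff.1 hr
  refine ⟨z r, ⟨mem_image_of_mem u (by simp), mem_image_of_mem w (by simp)⟩, ?_⟩
  rintro i ⟨hx, hy⟩
  obtain ⟨q, rfl, hu, hw⟩ := hrect.exists_of_mem_image hx hy
  rw [hbij.1 (Prod.ext hu hw)]

end FiberRectangular

lemma card_image_eq_card_image_of_fiberRectangular {R ι α β γ : Type*} [Fintype R]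
    [DecidableEq ι] [DecidableEq α] [DecidableEq β] [DecidableEq γ]
    {z : R → ι} {u : R → α} {w : R → β} {y : R → γ}
    (huy : Injective fun r => (u r, y r)) (hwy : Injective fun r => (w r, y r))
    (hu : FiberRectangular z u y) (hw : FiberRectangular z w y) (i : ι) :
    #(({r | z r = i} : Finset R).image u) = #(({r | z r = i} : Finset R).image w) := by
  rcases (({r | z r = i} : Finset R).image y).eq_empty_or_nonempty with hy | hy
  · rw [image_eq_empty] at hy
    rw [hy, image_empty, image_empty, card_empty, card_empty]
  refine Nat.eq_of_mul_eq_mul_right (card_pos.2 hy) ?_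
  rw [hu.card_image_mul_card_image huy, hw.card_image_mul_card_image hwy]

lemma rU25hat1_add_eq {j k : Fin 3} (hjk : j ≠ k) :
    rU25hat1 {0, j.succ} + rU25hat1 {0, k.succ} = rU25hat1 {0} + rU25hat1 {0, j.succ, k.succ} := by
  fin_cases j <;> fin_cases k
  all_goals first | exact absurd rfl hjk | (simp +decide [rU25hat1]; norm_num)

lemma rU23_234_add_eq {j k : Fin 3} (hjk : j ≠ k) :
    rU23_234 {0, j.succ} + rU23_234 {0, k.succ} = rU23_234 {0} + rU23_234 {0, j.succ, k.succ} := by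
  fin_cases j <;> fin_cases k
  all_goals first | exact absurd rfl hjk | (simp +decide [rU23_234]; norm_num)

section Array

variable {v t : ℕ} {c1 : Fin (v ^ 2) → Fin t} {c : Fin (v ^ 2) → Fin 3 → Fin v}

lemma IsVOA23.bijective (hVOA : IsVOA23 v c) {j k : Fin 3} (hjk : j ≠ k) :
    Bijective fun r => (c r j, c r k) := by
  refine (bijective_iff_existsUnique _).2 fun ⟨x, y⟩ => ?_
  obtain ⟨r, hr⟩ := card_eq_one.1 (hVOA j k hjk x y)
  have hmem (s : Fin (v ^ 2)) : (c s j, c s k) = (x, y) ↔ s = r := by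
    rw [← mem_singleton (a := r), ← hr]
    simp [Prod.ext_iff]
  exact ⟨r, (hmem r).2 rfl, fun s hs => (hmem s).1 hs⟩

lemma mkT_zero (r : Fin (v ^ 2)) : mkT c1 c r 0 = c1 r := rfl

lemma mkT_succ (r : Fin (v ^ 2)) (j : Fin 3) : mkT c1 c r j.succ = c r j := by
  simp [mkT, Fin.succ_ne_zero]

lemma condMutualInfo_mkT_eq_zero {a b : ℝ}
    (hEnt : ∀ A : Finset (Fin 4),
      colEntropy (fun _ => ((v ^ 2 : ℕ) : ℝ)⁻¹) (mkT c1 c) A =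
        a * rU25hat1 A + b * rU23_234 A)
    {j k : Fin 3} (hjk : j ≠ k) :
    uniformEntropy (fun r => (c1 r, c r j)) + uniformEntropy (fun r => (c1 r, c r k))
      - uniformEntropy c1 - uniformEntropy (fun r => (c1 r, c r j, c r k)) = 0 := by
  have hE {β : Type} [DecidableEq β] (A : Finset (Fin 4)) (f : Fin (v ^ 2) → β)
      (hf : ∀ r s, (∀ i ∈ A, mkT c1 c s i = mkT c1 c r i) ↔ f s = f r) :
      uniformEntropy f = a * rU25hat1 A + b * rU23_234 A :=
    (colEntropy_eq_uniformEntropy (Fintype.card_fin _) _ A f hf).symm.trans (hEnt A)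
  rw [hE {0, j.succ} _ (by simp [mkT_zero, mkT_succ, Fin.val_inj, Prod.ext_iff]),
    hE {0, k.succ} _ (by simp [mkT_zero, mkT_succ, Fin.val_inj, Prod.ext_iff]),
    hE {0} _ (by simp [mkT_zero, Fin.val_inj]),
    hE {0, j.succ, k.succ} _ (by simp [mkT_zero, mkT_succ, Fin.val_inj, Prod.ext_iff])]
  linear_combination a * rU25hat1_add_eq hjk + b * rU23_234_add_eq hjk

end Array

theorem statement15_general (v t : ℕ)
    (c1 : Fin (v ^ 2) → Fin t) (c : Fin (v ^ 2) → Fin 3 → Fin v)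
    (hVOA : IsVOA23 v c)
    (a b : ℝ)
    (hEnt : ∀ A : Finset (Fin 4),
      colEntropy (fun _ => ((v ^ 2 : ℕ) : ℝ)⁻¹) (mkT c1 c) A
        = a * rU25hat1 A + b * rU23_234 A) :
    (∀ i : Fin t, (valSet c1 c 0 i).card = (valSet c1 c 1 i).card) ∧
    (∀ i : Fin t,
      (Finset.univ.filter
          (fun r => c r 0 ∈ valSet c1 c 0 i ∧ c r 1 ∈ valSet c1 c 1 i)).card
        = (valSet c1 c 0 i).card ^ 2 ∧
      ∀ j k : Fin 3, j ≠ k → ∀ x y : Fin v,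
        x ∈ (Finset.univ.filter
              (fun r => c r 0 ∈ valSet c1 c 0 i ∧ c r 1 ∈ valSet c1 c 1 i)).image
                (fun r => c r j) →
        y ∈ (Finset.univ.filter
              (fun r => c r 0 ∈ valSet c1 c 0 i ∧ c r 1 ∈ valSet c1 c 1 i)).image
                (fun r => c r k) →
        ((Finset.univ.filter
            (fun r => c r 0 ∈ valSet c1 c 0 i ∧ c r 1 ∈ valSet c1 c 1 i)).filter
              (fun r => c r j = x ∧ c r k = y)).card = 1) ∧
    (∀ x y : Fin v, ∃! i : Fin t, x ∈ valSet c1 c 0 i ∧ y ∈ valSet c1 c 1 i) ∧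
    a = (2 : ℝ)⁻¹ * (-∑ i : Fin t,
        ((((valSet c1 c 0 i).card ^ 2 : ℕ) : ℝ) / ((v ^ 2 : ℕ) : ℝ)) *
          Real.log ((((valSet c1 c 0 i).card ^ 2 : ℕ) : ℝ) / ((v ^ 2 : ℕ) : ℝ))) := by
  have hrect {j k : Fin 3} (hjk : j ≠ k) : FiberRectangular c1 (c · j) (c · k) :=
    .of_condMutualInfo_eq_zero (hVOA.bijective hjk).1 (condMutualInfo_mkT_eq_zero hEnt hjk)
  have h01 : (0 : Fin 3) ≠ 1 := by decide
  have h02 : (0 : Fin 3) ≠ 2 := by decide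
  have h12 : (1 : Fin 3) ≠ 2 := by decide
  have hAB (i : Fin t) : #(valSet c1 c 0 i) = #(valSet c1 c 1 i) :=
    card_image_eq_card_image_of_fiberRectangular (hVOA.bijective h02).1 (hVOA.bijective h12).1
      (hrect h02) (hrect h12) i
  have hcard (i : Fin t) : #({r | c1 r = i} : Finset _) = #(valSet c1 c 0 i) ^ 2 := by
    rw [sq #(valSet c1 c 0 i), ← (hrect h01).card_image_mul_card_image (hVOA.bijective h01).1 i]
    exact congrArg (#(valSet c1 c 0 i) * ·) (hAB i).symm
  have hfiber (i : Fin t) :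
      ({r | c r 0 ∈ valSet c1 c 0 i ∧ c r 1 ∈ valSet c1 c 1 i} : Finset _) =
        ({r | c1 r = i} : Finset _) :=
    (hrect h01).filter_mem_image_eq (hVOA.bijective h01).1 i
  refine ⟨hAB, fun i => ⟨?_, fun j k hjk x y hx hy => ?_⟩,
    (hrect h01).existsUnique_mem_image (hVOA.bijective h01), ?_⟩
  · rw [hfiber, hcard]
  · rw [hfiber] at hx hy ⊢
    exact (hrect hjk).card_filter_eq_one (hVOA.bijective hjk).1 hx hy
  · have hE := hEnt {0}
    rw [colEntropy_eq_uniformEntropy (Fintype.card_fin _) _ _ c1 (by simp [mkT_zero, Fin.val_inj]),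
      uniformEntropy_eq_sum_fiber (Fintype.card_fin _)] at hE
    rw [show rU25hat1 {0} = 2 by simp [rU25hat1], show rU23_234 {0} = 0 by simp +decide [rU23_234]]
      at hE
    simp only [hcard] at hE
    linarith

/-- Let `T` be a `v²×4` array whose columns `2,3,4` form a `VOA(U_{2,3}, v)`, whose
column `1` is surjective onto `Fin t`, and such that under the uniform distribution
on rows the entropy function equals `a·r(Û^1_{2,5}) + b·r(U^{234}_{2,3})`.  With
`A_i` (resp. `B_i`) the set of values of column `2` (resp. `3`) co-occurring with
value `i` of column `1`: `|A_i| = |B_i|`; the subarray induced by `A_i, B_i` is a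
`VOA(U_{2,3}, |A_i|)`; the sets `A_i × B_i` partition the alphabet square; and
`a = ½·H(|A_i|²/v² : i)`. -/
theorem statement15 (v t : ℕ) (hv : 1 ≤ v)
    (c1 : Fin (v ^ 2) → Fin t) (c : Fin (v ^ 2) → Fin 3 → Fin v)
    (hVOA : IsVOA23 v c) (hsurj : Function.Surjective c1)
    (a b : ℝ)
    (hEnt : ∀ A : Finset (Fin 4),
      colEntropy (fun _ => ((v ^ 2 : ℕ) : ℝ)⁻¹) (mkT c1 c) A
        = a * rU25hat1 A + b * rU23_234 A) :
    (∀ i : Fin t, (valSet c1 c 0 i).card = (valSet c1 c 1 i).card) ∧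
    (∀ i : Fin t,
      (Finset.univ.filter
          (fun r => c r 0 ∈ valSet c1 c 0 i ∧ c r 1 ∈ valSet c1 c 1 i)).card
        = (valSet c1 c 0 i).card ^ 2 ∧
      ∀ j k : Fin 3, j ≠ k → ∀ x y : Fin v,
        x ∈ (Finset.univ.filter
              (fun r => c r 0 ∈ valSet c1 c 0 i ∧ c r 1 ∈ valSet c1 c 1 i)).image
                (fun r => c r j) →
        y ∈ (Finset.univ.filter
              (fun r => c r 0 ∈ valSet c1 c 0 i ∧ c r 1 ∈ valSet c1 c 1 i)).image
                (fun r => c r k) →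
        ((Finset.univ.filter
            (fun r => c r 0 ∈ valSet c1 c 0 i ∧ c r 1 ∈ valSet c1 c 1 i)).filter
              (fun r => c r j = x ∧ c r k = y)).card = 1) ∧
    (∀ x y : Fin v, ∃! i : Fin t, x ∈ valSet c1 c 0 i ∧ y ∈ valSet c1 c 1 i) ∧
    a = (2 : ℝ)⁻¹ * (-∑ i : Fin t,
        ((((valSet c1 c 0 i).card ^ 2 : ℕ) : ℝ) / ((v ^ 2 : ℕ) : ℝ)) *
          Real.log ((((valSet c1 c 0 i).card ^ 2 : ℕ) : ℝ) / ((v ^ 2 : ℕ) : ℝ))) :=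
  statement15_general v t c1 c hVOA a b hEnt
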